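/- arXiv:1309.1517 — 7 statements merged into one kernel-verified Lean document; each statement's English description precedes it below -/
import Mathlib

section
/- Let X take values in {1,...,n} with p(1) ≥ ... ≥ p(n) > 0, and for nonempty a ⊆ {2,...,n} let X_a be the indicator of the event X ∈ a. Then the indicator X_{{n}} of the singleton {n} achieves the minimum entropy: H(X_{{n}}) ≤ H(X_a) for all nonempty a ⊆ {2,...,n}. -/
open scoped BigOperators

/-- `μ` is a probability mass function on the finite sample space `Ω`. -/
def IsPMF {Ω : Type*} [Fintype Ω] (μ : Ω → ℝ) : Prop :=
  (∀ ω, 0 ≤ μ ω) ∧ ∑ ω, μ ω = 1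

/-- The probability that the random variable `X` takes the value `s`. -/
noncomputable def prob {Ω S : Type*} [Fintype Ω] [DecidableEq S]
    (μ : Ω → ℝ) (X : Ω → S) (s : S) : ℝ :=
  ∑ ω ∈ Finset.univ.filter fun ω => X ω = s, μ ω

/-- Shannon entropy (natural logarithm) of a random variable with finite codomain. -/
noncomputable def entropy {Ω S : Type*} [Fintype Ω] [Fintype S] [DecidableEq S]
    (μ : Ω → ℝ) (X : Ω → S) : ℝ :=
  ∑ s, Real.negMulLog (prob μ X s)

/-- Conditional Shannon entropy `H(X | Y) = H(X, Y) - H(Y)`. -/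
noncomputable def condEntropy {Ω S T : Type*} [Fintype Ω] [Fintype S] [Fintype T]
    [DecidableEq S] [DecidableEq T] (μ : Ω → ℝ) (X : Ω → S) (Y : Ω → T) : ℝ :=
  entropy μ (fun ω => (X ω, Y ω)) - entropy μ Y

lemma bool_entropy {Ω : Type*} [Fintype Ω] (μ : Ω → ℝ) (hsum : ∑ ω, μ ω = 1)
    (Y : Ω → Bool) : entropy μ Y = Real.binEntropy (prob μ Y true) := by
  have hfalse : prob μ Y false = 1 - prob μ Y true := by
    have := Finset.sum_filter_add_sum_filter_not Finset.univ (fun ω => Y ω = true) μ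
    rw [hsum] at this
    simp only [prob]
    have h2 : (Finset.univ.filter fun ω => Y ω = false) =
        (Finset.univ.filter fun ω => ¬(Y ω = true)) := by
      apply Finset.filter_congr; intro ω _; simp
    rw [h2]; linarith
  rw [entropy, Fintype.sum_bool, hfalse, Real.binEntropy_eq_negMulLog_add_negMulLog_one_sub]

/-- Among all indicators of events `X ∈ a` with nonempty `a ⊆ {2,…,n}`, the indicator of the
singleton `{n}` (the smallest atom) has minimum entropy. -/
theorem entropy_indicator_singleton_min (n : ℕ) (hn : 2 ≤ n) {Ω : Type*} [Fintype Ω]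
    (μ : Ω → ℝ) (hμ : IsPMF μ) (X : Ω → ℕ)
    (hrange : ∀ ω, 0 < μ ω → X ω ∈ Finset.Icc 1 n)
    (hpos : ∀ i ∈ Finset.Icc 1 n, 0 < prob μ X i)
    (hmono : ∀ i j, 1 ≤ i → i ≤ j → j ≤ n → prob μ X j ≤ prob μ X i)
    (a : Finset ℕ) (ha : a ⊆ Finset.Icc 2 n) (hane : a.Nonempty) :
    entropy μ (fun ω => decide (X ω = n)) ≤ entropy μ (fun ω => decide (X ω ∈ a)) := by
  classical
  obtain ⟨hμ0, hμ1⟩ := hμ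
  -- probabilities of the two events
  set q : ℝ := prob μ (fun ω => decide (X ω = n)) true with hq
  set p : ℝ := prob μ (fun ω => decide (X ω ∈ a)) true with hp
  have hqeq : q = prob μ X n := by
    simp only [hq, prob]
    apply Finset.sum_congr _ (fun _ _ => rfl)
    apply Finset.filter_congr; intro ω _; simp
  -- q > 0
  have hq0 : 0 < q := by
    rw [hqeq]; exact hpos n (by simp; omega)
  -- q ≤ p
  obtain ⟨i, hia⟩ := hane
  have hi2n := Finset.mem_Icc.1 (ha hia)
  have hqp : q ≤ p := by
    have h1 : prob μ X n ≤ prob μ X i := hmono i n (by omega) hi2n.2 le_rfl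
    have h2 : prob μ X i ≤ p := by
      simp only [hp, prob]
      apply Finset.sum_le_sum_of_subset_of_nonneg
      · intro ω hω
        simp only [Finset.mem_filter] at *
        refine ⟨hω.1, ?_⟩
        simp only [decide_eq_true_eq]
        rw [hω.2]; exact hia
      · intro ω _ _; exact hμ0 ω
    rw [hqeq]; linarith
  -- p ≤ 1 - q
  have hcompl : p + (∑ ω ∈ Finset.univ.filter fun ω => ¬ ((fun ω => decide (X ω ∈ a)) ω = true), μ ω) = 1 := by
    rw [hp, prob, Finset.sum_filter_add_sum_filter_not, hμ1]
  have hp1q : p ≤ 1 - q := by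
    have h1 : prob μ X n ≤ prob μ X 1 := hmono 1 n le_rfl (by omega) le_rfl
    have h2 : prob μ X 1 ≤ ∑ ω ∈ Finset.univ.filter fun ω => ¬ ((fun ω => decide (X ω ∈ a)) ω = true), μ ω := by
      rw [prob]
      apply Finset.sum_le_sum_of_subset_of_nonneg
      · intro ω hω
        simp only [Finset.mem_filter, decide_eq_true_eq] at *
        refine ⟨hω.1, fun h1a => ?_⟩
        rw [hω.2] at h1a
        have := Finset.mem_Icc.1 (ha h1a); omega
      · intro ω _ _; exact hμ0 ω
    rw [hqeq] at hq0 ⊢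
    linarith
  -- rewrite entropies as binary entropies
  rw [bool_entropy μ hμ1, bool_entropy μ hμ1, ← hq, ← hp]
  -- binary entropy monotonicity
  have hq12 : q ≤ 2⁻¹ := by linarith
  have hmonoOn := Real.binEntropy_strictMonoOn.monotoneOn
  by_cases hcase : p ≤ 2⁻¹
  · exact hmonoOn (Set.mem_Icc.2 ⟨hq0.le, hq12⟩) (Set.mem_Icc.2 ⟨by linarith, hcase⟩) hqp
  · rw [← Real.binEntropy_one_sub p]
    exact hmonoOn (Set.mem_Icc.2 ⟨hq0.le, hq12⟩)
      (Set.mem_Icc.2 ⟨by linarith, by linarith⟩) (by linarith)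
end

section
/- Let Y be a random variable on a finite probability space, and suppose Y_1, ..., Y_{n-1} are random variables, each a deterministic function of Y, such that H(Y_1) < H(Y_1, Y_2) < ... < H(Y_1, ..., Y_{n-1}) (all inequalities strict) and H(Y_1) > 0. Then the support of Y has at least n elements. -/
open scoped BigOperators

open Finset

lemma negMulLog_sum_eq {T : Type*} (A : Finset T) (p : T → ℝ) :
    Real.negMulLog (∑ t ∈ A, p t) = ∑ t ∈ A, -(p t) * Real.log (∑ u ∈ A, p u) := by
  rw [Real.negMulLog, ← Finset.sum_mul, ← Finset.sum_neg_distrib]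

lemma term_le {T : Type*} {A : Finset T} {p : T → ℝ} (h : ∀ t ∈ A, 0 ≤ p t)
    {t : T} (ht : t ∈ A) : -(p t) * Real.log (∑ u ∈ A, p u) ≤ Real.negMulLog (p t) := by
  rcases eq_or_lt_of_le (h t ht) with h0 | h0
  · simp [← h0, Real.negMulLog]
  · rw [Real.negMulLog, neg_mul, neg_mul, neg_le_neg_iff]
    exact mul_le_mul_of_nonneg_left (Real.log_le_log h0 (Finset.single_le_sum h ht)) h0.le

lemma negMulLog_sum_le {T : Type*} (A : Finset T) (p : T → ℝ) (h : ∀ t ∈ A, 0 ≤ p t) :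
    Real.negMulLog (∑ t ∈ A, p t) ≤ ∑ t ∈ A, Real.negMulLog (p t) := by
  rw [negMulLog_sum_eq]
  exact Finset.sum_le_sum fun t ht => term_le h ht

lemma negMulLog_sum_lt {T : Type*} (A : Finset T) (p : T → ℝ) (h : ∀ t ∈ A, 0 ≤ p t)
    {t1 t2 : T} (h1 : t1 ∈ A) (h2 : t2 ∈ A) (hne : t1 ≠ t2)
    (hp1 : 0 < p t1) (hp2 : 0 < p t2) :
    Real.negMulLog (∑ t ∈ A, p t) < ∑ t ∈ A, Real.negMulLog (p t) := by
  rw [negMulLog_sum_eq]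
  refine Finset.sum_lt_sum (fun t ht => term_le h ht) ⟨t1, h1, ?_⟩
  have hlt : p t1 < ∑ u ∈ A, p u :=
    Finset.single_lt_sum hne.symm h1 h2 hp2 (fun k hk _ => h k hk)
  rw [Real.negMulLog, neg_mul, neg_mul, neg_lt_neg_iff]
  exact mul_lt_mul_of_pos_left (Real.log_lt_log hp1 hlt) hp1

section probs
variable {Ω S T : Type*} [Fintype Ω] [Fintype S] [Fintype T] [DecidableEq S] [DecidableEq T]
  {μ : Ω → ℝ}

lemma prob_nonneg (hμ0 : ∀ ω, 0 ≤ μ ω) (X : Ω → S) (s : S) : 0 ≤ prob μ X s :=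
  Finset.sum_nonneg fun ω _ => hμ0 ω

lemma sum_prob (X : Ω → S) : ∑ s, prob μ X s = ∑ ω, μ ω := by
  unfold prob
  rw [Finset.sum_fiberwise]

lemma prob_comp (X : Ω → T) (π : T → S) (s : S) :
    prob μ (fun ω => π (X ω)) s = ∑ t ∈ univ.filter (fun t => π t = s), prob μ X t := by
  unfold prob
  rw [Finset.sum_fiberwise_eq_sum_filter]
  congr 1
  ext ω
  simp

lemma supp_comp_eq_image (hμ0 : ∀ ω, 0 ≤ μ ω) (X : Ω → T) (π : T → S) :
    (univ.filter fun s => 0 < prob μ (fun ω => π (X ω)) s)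
      = (univ.filter fun t => 0 < prob μ X t).image π := by
  ext s
  simp only [mem_filter, mem_univ, true_and, mem_image, prob_comp]
  constructor
  · intro hs
    obtain ⟨t, ht, htp⟩ := Finset.exists_lt_of_sum_lt (f := fun _ => (0:ℝ)) (by simpa using hs)
    exact ⟨t, htp, (mem_filter.mp ht).2⟩
  · rintro ⟨t, ht, rfl⟩
    calc (0:ℝ) < prob μ X t := ht
      _ ≤ ∑ u ∈ univ.filter (fun u => π u = π t), prob μ X u :=
        Finset.single_le_sum (fun u _ => prob_nonneg hμ0 X u)
          (by simp)

lemma card_supp_comp_le (hμ0 : ∀ ω, 0 ≤ μ ω) (X : Ω → T) (π : T → S) :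
    (univ.filter fun s => 0 < prob μ (fun ω => π (X ω)) s).card
      ≤ (univ.filter fun t => 0 < prob μ X t).card := by
  rw [supp_comp_eq_image hμ0]
  exact Finset.card_image_le

lemma entropy_comp_lt (hμ0 : ∀ ω, 0 ≤ μ ω) (X : Ω → T) (π : T → S)
    (hcard : (univ.filter fun s => 0 < prob μ (fun ω => π (X ω)) s).card
      < (univ.filter fun t => 0 < prob μ X t).card) :
    entropy μ (fun ω => π (X ω)) < entropy μ X := by
  have hmap : ∀ t ∈ univ.filter (fun t => 0 < prob μ X t),
      π t ∈ univ.filter fun s => 0 < prob μ (fun ω => π (X ω)) s := by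
    intro t ht
    rw [supp_comp_eq_image hμ0]
    exact Finset.mem_image_of_mem π ht
  obtain ⟨t1, ht1, t2, ht2, hne, heq⟩ :=
    Finset.exists_ne_map_eq_of_card_lt_of_maps_to hcard hmap
  unfold entropy
  simp only [prob_comp]
  calc ∑ s, Real.negMulLog (∑ t ∈ univ.filter (fun t => π t = s), prob μ X t)
      < ∑ s, ∑ t ∈ univ.filter (fun t => π t = s), Real.negMulLog (prob μ X t) := by
        refine Finset.sum_lt_sum
          (fun s _ => negMulLog_sum_le _ _ (fun t _ => prob_nonneg hμ0 X t)) ?_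
        refine ⟨π t1, mem_univ _, ?_⟩
        exact negMulLog_sum_lt _ _ (fun t _ => prob_nonneg hμ0 X t)
          (by simp) (by simp [heq]) hne (mem_filter.mp ht1).2 (mem_filter.mp ht2).2
    _ = ∑ t, Real.negMulLog (prob μ X t) := Finset.sum_fiberwise _ _ _


lemma inj_of_entropy_comp_eq (hμ0 : ∀ ω, 0 ≤ μ ω) (X : Ω → T) (π : T → S)
    (h : entropy μ (fun ω => π (X ω)) = entropy μ X) :
    ∀ t1, 0 < prob μ X t1 → ∀ t2, 0 < prob μ X t2 → π t1 = π t2 → t1 = t2 := by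
  have hcard : (univ.filter fun t => 0 < prob μ X t).card
      ≤ (univ.filter fun s => 0 < prob μ (fun ω => π (X ω)) s).card := by
    by_contra hc
    push_neg at hc
    exact absurd h (ne_of_lt (entropy_comp_lt hμ0 X π hc))
  have himg := supp_comp_eq_image hμ0 X π
  have hc2 : ((univ.filter fun t => 0 < prob μ X t).image π).card
      = (univ.filter fun t => 0 < prob μ X t).card :=
    le_antisymm Finset.card_image_le (by rw [← himg]; exact hcard)
  have hinj := Finset.injOn_of_card_image_eq hc2
  intro t1 h1 t2 h2 hpi
  exact hinj (by simp [h1]) (by simp [h2]) hpi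

lemma entropy_comp_eq_of_card_le (hμ0 : ∀ ω, 0 ≤ μ ω) (X : Ω → T) (π : T → S)
    (hcard : (univ.filter fun t => 0 < prob μ X t).card
      ≤ (univ.filter fun s => 0 < prob μ (fun ω => π (X ω)) s).card) :
    entropy μ (fun ω => π (X ω)) = entropy μ X := by
  have himg := supp_comp_eq_image hμ0 X π
  have hc2 : ((univ.filter fun t => 0 < prob μ X t).image π).card
      = (univ.filter fun t => 0 < prob μ X t).card :=
    le_antisymm Finset.card_image_le (by rw [← himg]; exact hcard)
  have hinj := Finset.injOn_of_card_image_eq hc2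
  unfold entropy
  have hq0 : ∀ s ∈ univ, s ∉ univ.filter (fun s => 0 < prob μ (fun ω => π (X ω)) s) →
      Real.negMulLog (prob μ (fun ω => π (X ω)) s) = 0 := by
    intro s _ hs
    simp only [mem_filter, mem_univ, true_and, not_lt] at hs
    have h2 : prob μ (fun ω => π (X ω)) s = 0 :=
      le_antisymm hs (prob_nonneg hμ0 _ s)
    simp [h2]
  have hp0 : ∀ t ∈ univ, t ∉ univ.filter (fun t => 0 < prob μ X t) →
      Real.negMulLog (prob μ X t) = 0 := by
    intro t _ ht
    simp only [mem_filter, mem_univ, true_and, not_lt] at ht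
    have h2 : prob μ X t = 0 := le_antisymm ht (prob_nonneg hμ0 _ t)
    simp [h2]
  rw [← Finset.sum_subset (Finset.subset_univ _) hq0,
      ← Finset.sum_subset (Finset.subset_univ _) hp0,
      himg, Finset.sum_image (fun a ha b hb => hinj ha hb)]
  apply Finset.sum_congr rfl
  intro t ht
  congr 1
  rw [prob_comp]
  apply Finset.sum_eq_single_of_mem t (by simp)
  intro u hu hne
  by_contra hne0
  have hu0 : 0 < prob μ X u := (prob_nonneg hμ0 X u).lt_of_ne (Ne.symm hne0)
  exact hne (hinj (by simp [hu0]) (by simpa using ht) ((mem_filter.mp hu).2))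

lemma two_le_card_supp (hμ0 : ∀ ω, 0 ≤ μ ω) (hμ1 : ∑ ω, μ ω = 1) (X : Ω → S)
    (h : 0 < entropy μ X) :
    2 ≤ (univ.filter fun s => 0 < prob μ X s).card := by
  obtain ⟨s, _, hs⟩ := Finset.exists_lt_of_sum_lt (f := fun _ => (0:ℝ))
    (by simpa [entropy] using h)
  have hps : 0 < prob μ X s := by
    rcases (prob_nonneg hμ0 X s).eq_or_lt with h0 | h0
    · rw [← h0] at hs; simp [Real.negMulLog] at hs
    · exact h0
  have hlt1 : prob μ X s < 1 := by
    by_contra h1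
    push_neg at h1
    have : Real.negMulLog (prob μ X s) ≤ 0 := by
      rw [Real.negMulLog, neg_mul, neg_nonpos]
      exact mul_nonneg (by linarith) (Real.log_nonneg h1)
    linarith
  have hsum : ∑ s', prob μ X s' = 1 := by rw [sum_prob, hμ1]
  have hrest : 0 < ∑ s' ∈ univ.erase s, prob μ X s' := by
    have := Finset.add_sum_erase univ (prob μ X) (mem_univ s)
    rw [hsum] at this
    linarith
  obtain ⟨s', hs', hps'⟩ := Finset.exists_lt_of_sum_lt (f := fun _ => (0:ℝ))
    (g := prob μ X) (by rw [Finset.sum_const_zero]; exact hrest)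
  rw [show (2:ℕ) = 1 + 1 from rfl, ← Nat.lt_iff_add_one_le]
  exact Finset.one_lt_card.mpr
    ⟨s, by simp [hps], s', by simp [hps'], fun he => (Finset.mem_erase.mp hs').1 he.symm⟩

end probs

/-- If `Y₁,…,Y_{n-1}` are deterministic functions of `Y` whose prefix joint entropies are
strictly increasing, with `H(Y₁) > 0`, then the support of `Y` has at least `n` elements. -/
theorem support_ge_of_strict_chain (n : ℕ) (hn : 2 ≤ n) {Ω S T : Type*} [Fintype Ω]
    [Fintype S] [Fintype T] [DecidableEq S] [DecidableEq T]
    (μ : Ω → ℝ) (hμ : IsPMF μ) (Y : Ω → S) (Ys : Fin (n - 1) → Ω → T)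
    (hdet : ∀ i, condEntropy μ (Ys i) Y = 0)
    (hfirst : 0 < entropy μ (Ys ⟨0, by omega⟩))
    (hchain : ∀ k : ℕ, 1 ≤ k → (hk : k + 1 ≤ n - 1) →
      entropy μ (fun ω (i : Fin k) => Ys (Fin.castLE (by omega) i) ω) <
        entropy μ (fun ω (i : Fin (k + 1)) => Ys (Fin.castLE hk i) ω)) :
    n ≤ (Finset.univ.filter fun s => 0 < prob μ Y s).card := by
  obtain ⟨hμ0, hμ1⟩ := hμ
  classical
  have key : ∀ k : ℕ, 1 ≤ k → ∀ hk : k ≤ n - 1,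
      k + 1 ≤ (Finset.univ.filter fun f : Fin k → T =>
        0 < prob μ (fun ω (i : Fin k) => Ys (Fin.castLE hk i) ω) f).card := by
    intro k hk1
    induction k, hk1 using Nat.le_induction with
    | base =>
      intro hk
      have h2 : 2 ≤ (Finset.univ.filter fun t : T =>
          0 < prob μ (fun ω => (fun i : Fin 1 => Ys (Fin.castLE hk i) ω) ⟨0, Nat.one_pos⟩) t).card :=
        two_le_card_supp hμ0 hμ1 _ hfirst
      exact le_trans h2 (card_supp_comp_le hμ0
        (fun ω (i : Fin 1) => Ys (Fin.castLE hk i) ω) (fun f => f ⟨0, Nat.one_pos⟩))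
    | succ k hk1 ih =>
      intro hk
      have hkk : k ≤ n - 1 := by omega
      have ihk := ih hkk
      by_contra hcon
      push_neg at hcon
      have hle : (Finset.univ.filter fun f : Fin (k+1) → T =>
          0 < prob μ (fun ω (i : Fin (k+1)) => Ys (Fin.castLE hk i) ω) f).card
          ≤ (Finset.univ.filter fun f : Fin k → T =>
            0 < prob μ (fun ω => (fun j : Fin k =>
              (fun i : Fin (k+1) => Ys (Fin.castLE hk i) ω) (Fin.castLE (Nat.le_succ k) j))) f).card := by
        have : (Finset.univ.filter fun f : Fin (k+1) → T =>
            0 < prob μ (fun ω (i : Fin (k+1)) => Ys (Fin.castLE hk i) ω) f).card ≤ k + 1 := by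
          omega
        exact le_trans this ihk
      have heq := entropy_comp_eq_of_card_le hμ0
        (fun ω (i : Fin (k+1)) => Ys (Fin.castLE hk i) ω)
        (fun f (j : Fin k) => f (Fin.castLE (Nat.le_succ k) j)) hle
      exact absurd heq (ne_of_lt (hchain k hk1 hk))
  have hm2 : n - 1 ≤ n - 1 := le_rfl
  have hZ := key (n - 1) (by omega) hm2
  set Z : Ω → (Fin (n-1) → T) := fun ω i => Ys (Fin.castLE hm2 i) ω with hZdef
  set P : Ω → ((Fin (n-1) → T) × S) := fun ω => (Z ω, Y ω) with hPdef
  have hZP : (Finset.univ.filter fun f : Fin (n-1) → T => 0 < prob μ Z f).card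
      ≤ (Finset.univ.filter fun p => 0 < prob μ P p).card :=
    card_supp_comp_le hμ0 P Prod.fst
  have hinj_i : ∀ i : Fin (n-1), ∀ t1, 0 < prob μ (fun ω => (Ys i ω, Y ω)) t1 →
      ∀ t2, 0 < prob μ (fun ω => (Ys i ω, Y ω)) t2 → t1.2 = t2.2 → t1 = t2 := by
    intro i
    have hce : entropy μ (fun ω => (Ys i ω, Y ω)) = entropy μ Y := by
      have := hdet i
      unfold condEntropy at this
      linarith
    exact inj_of_entropy_comp_eq hμ0 (fun ω => (Ys i ω, Y ω)) Prod.snd hce.symm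
  have hmarg : ∀ (i : Fin (n-1)) (z : Fin (n-1) → T) (y : S),
      prob μ P (z, y) ≤ prob μ (fun ω => (Ys i ω, Y ω)) (z i, y) := by
    intro i z y
    apply Finset.sum_le_sum_of_subset_of_nonneg
    · intro ω hω
      simp only [Finset.mem_filter, Finset.mem_univ, true_and, hPdef, Prod.mk.injEq] at hω ⊢
      obtain ⟨hz, hy⟩ := hω
      refine ⟨?_, hy⟩
      have := congrFun hz i
      rw [hZdef] at this
      simpa using this
    · intro ω _ _
      exact hμ0 ω
  have hinjP : ∀ p1, 0 < prob μ P p1 → ∀ p2, 0 < prob μ P p2 → p1.2 = p2.2 → p1 = p2 := by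
    rintro ⟨z1, y1⟩ h1 ⟨z2, y2⟩ h2 hy
    simp only at hy
    subst hy
    have hz : z1 = z2 := by
      funext i
      have ha := lt_of_lt_of_le h1 (hmarg i z1 y1)
      have hb := lt_of_lt_of_le h2 (hmarg i z2 y1)
      have := hinj_i i (z1 i, y1) ha (z2 i, y1) hb rfl
      exact (Prod.mk.injEq _ _ _ _).mp this |>.1
    rw [hz]
  have hPY : (Finset.univ.filter fun p => 0 < prob μ P p).card
      ≤ (Finset.univ.filter fun s => 0 < prob μ Y s).card := by
    have himg := supp_comp_eq_image hμ0 P Prod.snd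
    have hYeq : (fun ω => Prod.snd (P ω)) = Y := rfl
    rw [hYeq] at himg
    rw [himg]
    rw [Finset.card_image_of_injOn]
    intro p1 hp1 p2 hp2 hsnd
    exact hinjP p1 (by simpa using hp1) p2 (by simpa using hp2) hsnd
  have hn' : n ≤ n - 1 + 1 := by omega
  calc n ≤ n - 1 + 1 := hn'
    _ ≤ (Finset.univ.filter fun f : Fin (n-1) → T => 0 < prob μ Z f).card := hZ
    _ ≤ (Finset.univ.filter fun p => 0 < prob μ P p).card := hZP
    _ ≤ (Finset.univ.filter fun s => 0 < prob μ Y s).card := hPY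
end

section
/- Let Y be a discrete random variable with |Supp(Y)| ≤ n. If there exist 2^{n-1} - 1 pairwise non-equivalent binary random variables, each a deterministic function of Y and each with strictly positive entropy, then |Supp(Y)| = n. -/
open scoped BigOperators

namespace AuxSupp

lemma nml_add_lt {a b : ℝ} (ha : 0 < a) (hb : 0 < b) :
    Real.negMulLog (a + b) < Real.negMulLog a + Real.negMulLog b := by
  have h1 : Real.log a < Real.log (a + b) := Real.log_lt_log ha (by linarith)
  have h2 : Real.log b < Real.log (a + b) := Real.log_lt_log hb (by linarith)
  simp only [Real.negMulLog]
  nlinarith [mul_lt_mul_of_pos_left h1 ha, mul_lt_mul_of_pos_left h2 hb]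

lemma nml_add_le {a b : ℝ} (ha : 0 ≤ a) (hb : 0 ≤ b) :
    Real.negMulLog (a + b) ≤ Real.negMulLog a + Real.negMulLog b := by
  rcases ha.eq_or_lt with h | h
  · simp [← h]
  rcases hb.eq_or_lt with h' | h'
  · simp [← h']
  exact (nml_add_lt h h').le

variable {Ω S : Type*} [Fintype Ω] [DecidableEq S] (μ : Ω → ℝ)

lemma prob_nonneg (h : ∀ ω, 0 ≤ μ ω) (X : Ω → S) (s : S) : 0 ≤ prob μ X s :=
  Finset.sum_nonneg fun ω _ => h ω

lemma prob_pos_of (h : ∀ ω, 0 ≤ μ ω) (X : Ω → S) (ω : Ω) (hω : 0 < μ ω) :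
    0 < prob μ X (X ω) := by
  have h2 : μ ω ≤ prob μ X (X ω) :=
    Finset.single_le_sum (fun i _ => h i) (by simp)
  linarith

lemma sum_prob [Fintype S] (X : Ω → S) : ∑ s, prob μ X s = ∑ ω, μ ω := by
  exact Finset.sum_fiberwise Finset.univ X μ

lemma prob_split (X : Ω → Bool) (Y : Ω → S) (s : S) :
    prob μ Y s = prob μ (fun ω => (X ω, Y ω)) (true, s)
      + prob μ (fun ω => (X ω, Y ω)) (false, s) := by
  unfold prob
  rw [Finset.sum_filter, Finset.sum_filter, Finset.sum_filter, ← Finset.sum_add_distrib]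
  refine Finset.sum_congr rfl fun ω _ => ?_
  cases hx : X ω <;> by_cases h' : Y ω = s <;> simp [hx, h', Prod.ext_iff]


variable [Fintype S]

lemma det_of_ce_zero (hμ : IsPMF μ) (X : Ω → Bool) (Y : Ω → S)
    (h : condEntropy μ X Y = 0) (s : S) :
    prob μ (fun ω => (X ω, Y ω)) (true, s) = 0 ∨
      prob μ (fun ω => (X ω, Y ω)) (false, s) = 0 := by
  set q := fun t => prob μ (fun ω => (X ω, Y ω)) (true, t) with hq
  set r := fun t => prob μ (fun ω => (X ω, Y ω)) (false, t) with hr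
  have hqn : ∀ t, 0 ≤ q t := fun t => prob_nonneg μ hμ.1 _ _
  have hrn : ∀ t, 0 ≤ r t := fun t => prob_nonneg μ hμ.1 _ _
  have hsplit : ∀ t, prob μ Y t = q t + r t := fun t => prob_split μ X Y t
  have hce : ∑ t, (Real.negMulLog (q t) + Real.negMulLog (r t)
      - Real.negMulLog (q t + r t)) = 0 := by
    rw [← h]
    unfold condEntropy entropy
    rw [Fintype.sum_prod_type, Fintype.sum_bool]
    rw [Finset.sum_sub_distrib, Finset.sum_add_distrib]
    rw [Finset.sum_congr rfl fun t _ => congrArg Real.negMulLog (hsplit t)]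
  have hterm : ∀ t ∈ Finset.univ, (0:ℝ) ≤ Real.negMulLog (q t) + Real.negMulLog (r t)
      - Real.negMulLog (q t + r t) := fun t _ => by
    have := nml_add_le (hqn t) (hrn t); linarith
  have hz := (Finset.sum_eq_zero_iff_of_nonneg hterm).1 hce s (Finset.mem_univ s)
  by_contra hcon
  push_neg at hcon
  have hq0 : 0 < q s := lt_of_le_of_ne (hqn s) (Ne.symm hcon.1)
  have hr0 : 0 < r s := lt_of_le_of_ne (hrn s) (Ne.symm hcon.2)
  have := nml_add_lt hq0 hr0
  linarith

lemma pointwise_det (hμ : IsPMF μ) (X : Ω → Bool) (Y : Ω → S)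
    (h : condEntropy μ X Y = 0) (ω : Ω) (hω : 0 < μ ω) :
    X ω = decide (0 < prob μ (fun ω' => (X ω', Y ω')) (true, Y ω)) := by
  have hpos : 0 < prob μ (fun ω' => (X ω', Y ω')) (X ω, Y ω) :=
    prob_pos_of μ hμ.1 (fun ω' => (X ω', Y ω')) ω hω
  rcases det_of_ce_zero μ hμ X Y h (Y ω) with h0 | h0
  · cases hx : X ω
    · simp [h0]
    · rw [hx] at hpos; rw [h0] at hpos; exact absurd hpos (lt_irrefl 0)
  · cases hx : X ω
    · rw [hx] at hpos; rw [h0] at hpos; exact absurd hpos (lt_irrefl 0)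
    · rw [hx] at hpos; simp [hpos]

lemma entropy_eq_zero_of_const (hμ : IsPMF μ) (X : Ω → Bool) (b : Bool)
    (h : ∀ ω, 0 < μ ω → X ω = b) : entropy μ X = 0 := by
  have h1 : prob μ X (!b) = 0 := by
    refine Finset.sum_eq_zero fun ω hω => ?_
    simp only [Finset.mem_filter] at hω
    by_contra hne
    have hpos : 0 < μ ω := lt_of_le_of_ne (hμ.1 ω) (Ne.symm hne)
    have := h ω hpos
    rw [this] at hω
    simp at hω
  have hsum : prob μ X true + prob μ X false = 1 := by
    have := sum_prob μ X
    rw [Fintype.sum_bool] at this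
    rw [this]; exact hμ.2
  have h2 : prob μ X b = 1 := by cases b <;> simp_all
  unfold entropy
  rw [Fintype.sum_bool]
  cases b <;> simp_all [Real.negMulLog]

lemma ce_zero_of_ae_eq (hμ : IsPMF μ) (X X' : Ω → Bool)
    (h : ∀ ω, 0 < μ ω → X ω = X' ω) : condEntropy μ X X' = 0 := by
  have hmu0 : ∀ ω, X ω ≠ X' ω → μ ω = 0 := by
    intro ω hne
    by_contra hne0
    exact hne (h ω (lt_of_le_of_ne (hμ.1 ω) (Ne.symm hne0)))
  have hne : ∀ b c : Bool, b ≠ c → prob μ (fun ω => (X ω, X' ω)) (b, c) = 0 := by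
    intro b c hbc
    refine Finset.sum_eq_zero fun ω hω => ?_
    simp only [Finset.mem_filter, Prod.mk.injEq] at hω
    exact hmu0 ω (by rw [hω.2.1, hω.2.2]; exact hbc)
  have heq : ∀ b : Bool, prob μ (fun ω => (X ω, X' ω)) (b, b) = prob μ X' b := by
    intro b
    unfold prob
    rw [Finset.sum_filter, Finset.sum_filter]
    refine Finset.sum_congr rfl fun ω _ => ?_
    by_cases h0 : 0 < μ ω
    · by_cases h' : X' ω = b <;> simp [h ω h0, h', Prod.ext_iff]
    · have hz : μ ω = 0 := le_antisymm (not_lt.1 h0) (hμ.1 ω)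
      simp [hz]
  unfold condEntropy entropy
  rw [Fintype.sum_prod_type, Fintype.sum_bool, Fintype.sum_bool, Fintype.sum_bool]
  rw [heq true, heq false, hne true false (by simp), hne false true (by simp)]
  simp [Real.negMulLog]
  ring

end AuxSupp

/-- If `|Supp Y| ≤ n` and there exist `2^(n-1) - 1` pairwise non-equivalent binary random
variables, each a deterministic function of `Y` with positive entropy, then `|Supp Y| = n`. -/
theorem support_eq_of_many_binary (n : ℕ) {Ω S : Type*} [Fintype Ω] [Fintype S] [DecidableEq S]
    (μ : Ω → ℝ) (hμ : IsPMF μ) (Y : Ω → S)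
    (hle : (Finset.univ.filter fun s => 0 < prob μ Y s).card ≤ n)
    (A : Fin (2 ^ (n - 1) - 1) → Ω → Bool)
    (hdet : ∀ i, condEntropy μ (A i) Y = 0)
    (hpos : ∀ i, 0 < entropy μ (A i))
    (hneq : ∀ i j, i ≠ j → ¬ (condEntropy μ (A i) (A j) = 0 ∧ condEntropy μ (A j) (A i) = 0)) :
    (Finset.univ.filter fun s => 0 < prob μ Y s).card = n := by
  classical
  set Supp := Finset.univ.filter fun s => 0 < prob μ Y s with hSupp
  have hsum : ∑ s, prob μ Y s = 1 := by rw [AuxSupp.sum_prob]; exact hμ.2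
  have hSne : Supp.Nonempty := by
    by_contra hne
    rw [Finset.not_nonempty_iff_eq_empty] at hne
    have hz : ∀ s : S, prob μ Y s = 0 := by
      intro s
      have : s ∉ Supp := by rw [hne]; exact Finset.notMem_empty s
      rw [hSupp] at this
      simp only [Finset.mem_filter, Finset.mem_univ, true_and, not_lt] at this
      exact le_antisymm this (AuxSupp.prob_nonneg μ hμ.1 Y s)
    rw [Finset.sum_congr rfl fun s _ => hz s] at hsum
    simp at hsum
  rcases Nat.lt_or_ge n 2 with hn | hn
  · interval_cases n
    · omega
    · exact le_antisymm hle (Finset.card_pos.2 hSne)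
  refine le_antisymm hle ?_
  by_contra hlt
  push_neg at hlt
  -- so Supp.card ≤ n - 1
  set q := fun (i : Fin (2 ^ (n - 1) - 1)) (s : S) =>
    prob μ (fun ω => (A i ω, Y ω)) (true, s) with hqdef
  set T := fun (i : Fin (2 ^ (n - 1) - 1)) =>
    Finset.univ.filter fun s => 0 < q i s with hTdef
  have hpt : ∀ i ω, 0 < μ ω → A i ω = decide (0 < q i (Y ω)) :=
    fun i ω hω => AuxSupp.pointwise_det μ hμ (A i) Y (hdet i) ω hω
  have hTS : ∀ i, T i ⊆ Supp := by
    intro i s hs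
    rw [hTdef] at hs
    simp only [Finset.mem_filter, Finset.mem_univ, true_and] at hs
    rw [hSupp]
    simp only [Finset.mem_filter, Finset.mem_univ, true_and]
    have hr : 0 ≤ prob μ (fun ω => (A i ω, Y ω)) (false, s) :=
      AuxSupp.prob_nonneg μ hμ.1 _ _
    rw [AuxSupp.prob_split μ (A i) Y s]
    rw [hqdef] at hs
    linarith
  have hTne : ∀ i, T i ≠ ∅ := by
    intro i he
    refine (hpos i).ne' (AuxSupp.entropy_eq_zero_of_const μ hμ (A i) false fun ω hω => ?_)
    rw [hpt i ω hω]
    have : Y ω ∉ T i := by rw [he]; exact Finset.notMem_empty _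
    rw [hTdef] at this
    simp only [Finset.mem_filter, Finset.mem_univ, true_and, not_lt] at this
    simp [not_lt.2 this]
  have hTproper : ∀ i, T i ≠ Supp := by
    intro i he
    refine (hpos i).ne' (AuxSupp.entropy_eq_zero_of_const μ hμ (A i) true fun ω hω => ?_)
    rw [hpt i ω hω]
    have hmem : Y ω ∈ Supp := by
      rw [hSupp]
      simp only [Finset.mem_filter, Finset.mem_univ, true_and]
      exact AuxSupp.prob_pos_of μ hμ.1 Y ω hω
    rw [← he, hTdef] at hmem
    simp only [Finset.mem_filter, Finset.mem_univ, true_and] at hmem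
    simp [hmem]
  have hinj : ∀ i j, T i = T j → i = j := by
    intro i j hij
    by_contra hne
    refine hneq i j hne ⟨?_, ?_⟩
    · refine AuxSupp.ce_zero_of_ae_eq μ hμ (A i) (A j) fun ω hω => ?_
      rw [hpt i ω hω, hpt j ω hω, decide_eq_decide]
      constructor
      · intro hq
        have : Y ω ∈ T i := by rw [hTdef]; simp [hq]
        rw [hij, hTdef] at this
        simpa using this
      · intro hq
        have : Y ω ∈ T j := by rw [hTdef]; simp [hq]
        rw [← hij, hTdef] at this
        simpa using this
    · refine AuxSupp.ce_zero_of_ae_eq μ hμ (A j) (A i) fun ω hω => ?_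
      rw [hpt i ω hω, hpt j ω hω, decide_eq_decide]
      constructor
      · intro hq
        have : Y ω ∈ T j := by rw [hTdef]; simp [hq]
        rw [← hij, hTdef] at this
        simpa using this
      · intro hq
        have : Y ω ∈ T i := by rw [hTdef]; simp [hq]
        rw [hij, hTdef] at this
        simpa using this
  -- counting
  set P := (Supp.powerset.erase ∅).erase Supp with hPdef
  have hmaps : ∀ i : Fin (2 ^ (n - 1) - 1), i ∈ Finset.univ → T i ∈ P := by
    intro i _
    rw [hPdef]
    rw [Finset.mem_erase, Finset.mem_erase]
    exact ⟨hTproper i, hTne i, Finset.mem_powerset.2 (hTS i)⟩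
  have hcard : 2 ^ (n - 1) - 1 ≤ P.card := by
    have := Finset.card_le_card_of_injOn T hmaps fun i _ j _ h => hinj i j h
    simpa using this
  have hPcard : P.card = 2 ^ Supp.card - 1 - 1 := by
    rw [hPdef, Finset.card_erase_of_mem, Finset.card_erase_of_mem, Finset.card_powerset]
    · exact Finset.mem_powerset.2 (Finset.empty_subset _)
    · exact Finset.mem_erase.2 ⟨hSne.ne_empty, Finset.mem_powerset.2 (Finset.Subset.refl _)⟩
  have hk : Supp.card ≤ n - 1 := by omega
  have hpow : 2 ^ Supp.card ≤ 2 ^ (n - 1) := Nat.pow_le_pow_right (by norm_num) hk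
  have h2 : 2 ≤ 2 ^ (n - 1) := by
    calc (2:ℕ) = 2 ^ 1 := rfl
    _ ≤ 2 ^ (n - 1) := Nat.pow_le_pow_right (by norm_num) (by omega)
  omega
end

section
/- Let h be a polymatroid on the ground set {U, Z_0, Z_1, Z_2}. Suppose h(U | {Z_0,Z_1}) = 0, h(U | {Z_0,Z_2}) = 0, h(U | {Z_1,Z_2}) = 0, and h({Z_0,Z_1,Z_2}) = h(Z_0) + h(Z_1) + h(Z_2). Then h(U) = 0. -/
/-- A polymatroid: a nonnegative, monotone, submodular set function vanishing on `∅`. -/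
def IsPolymatroid {α : Type*} [DecidableEq α] (h : Finset α → ℝ) : Prop :=
  h ∅ = 0 ∧ (∀ A, 0 ≤ h A) ∧ (∀ A B : Finset α, A ⊆ B → h A ≤ h B) ∧
    (∀ A B : Finset α, h (A ∪ B) + h (A ∩ B) ≤ h A + h B)

/-- Conditional entropy `h(A | B) = h(A ∪ B) - h(B)` derived from a set function. -/
noncomputable def polyCond {α : Type*} [DecidableEq α] (h : Finset α → ℝ) (A B : Finset α) : ℝ :=
  h (A ∪ B) - h B

/-- Conditional mutual information `I_h(A;B|C)` derived from a set function. -/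
noncomputable def polyMI {α : Type*} [DecidableEq α] (h : Finset α → ℝ) (A B C : Finset α) : ℝ :=
  h (A ∪ C) + h (B ∪ C) - h (A ∪ B ∪ C) - h C

/-- Ground set `{U, Z₀, Z₁, Z₂}` encoded as `Fin 4` with `U = 0, Z₀ = 1, Z₁ = 2, Z₂ = 3`.
If `U` is determined by each pair of the `Z`'s and the `Z`'s are mutually independent
under `h`, then `h(U) = 0`. -/
theorem polymatroid_common_info_trivial (h : Finset (Fin 4) → ℝ) (hpoly : IsPolymatroid h)
    (h01 : polyCond h {0} {1, 2} = 0) (h02 : polyCond h {0} {1, 3} = 0)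
    (h12 : polyCond h {0} {2, 3} = 0)
    (hind : h {1, 2, 3} = h {1} + h {2} + h {3}) :
    h {0} = 0 := by
  obtain ⟨h0, hpos, hmono, hsub⟩ := hpoly
  unfold polyCond at h01 h02 h12
  rw [show ({0} ∪ {1, 2} : Finset (Fin 4)) = {0, 1, 2} from by decide] at h01
  rw [show ({0} ∪ {1, 3} : Finset (Fin 4)) = {0, 1, 3} from by decide] at h02
  rw [show ({0} ∪ {2, 3} : Finset (Fin 4)) = {0, 2, 3} from by decide] at h12
  have s1 := hsub ({1, 2} : Finset (Fin 4)) {3}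
  rw [show ({1, 2} ∪ {3} : Finset (Fin 4)) = {1, 2, 3} from by decide,
    show ({1, 2} ∩ {3} : Finset (Fin 4)) = ∅ from by decide] at s1
  have s7 := hsub ({1} : Finset (Fin 4)) {2}
  rw [show ({1} ∪ {2} : Finset (Fin 4)) = {1, 2} from by decide,
    show ({1} ∩ {2} : Finset (Fin 4)) = ∅ from by decide] at s7
  have s8 := hsub ({1} : Finset (Fin 4)) {3}
  rw [show ({1} ∪ {3} : Finset (Fin 4)) = {1, 3} from by decide,
    show ({1} ∩ {3} : Finset (Fin 4)) = ∅ from by decide] at s8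
  have s9 := hsub ({2} : Finset (Fin 4)) {3}
  rw [show ({2} ∪ {3} : Finset (Fin 4)) = {2, 3} from by decide,
    show ({2} ∩ {3} : Finset (Fin 4)) = ∅ from by decide] at s9
  have s2 := hsub ({1, 3} : Finset (Fin 4)) {2}
  rw [show ({1, 3} ∪ {2} : Finset (Fin 4)) = {1, 2, 3} from by decide,
    show ({1, 3} ∩ {2} : Finset (Fin 4)) = ∅ from by decide] at s2
  have s3 := hsub ({2, 3} : Finset (Fin 4)) {1}
  rw [show ({2, 3} ∪ {1} : Finset (Fin 4)) = {1, 2, 3} from by decide,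
    show ({2, 3} ∩ {1} : Finset (Fin 4)) = ∅ from by decide] at s3
  have s4 := hsub ({0, 1, 2} : Finset (Fin 4)) {0, 1, 3}
  rw [show ({0, 1, 2} ∪ {0, 1, 3} : Finset (Fin 4)) = {0, 1, 2, 3} from by decide,
    show ({0, 1, 2} ∩ {0, 1, 3} : Finset (Fin 4)) = {0, 1} from by decide] at s4
  have s5 := hsub ({0, 1, 2} : Finset (Fin 4)) {0, 2, 3}
  rw [show ({0, 1, 2} ∪ {0, 2, 3} : Finset (Fin 4)) = {0, 1, 2, 3} from by decide,
    show ({0, 1, 2} ∩ {0, 2, 3} : Finset (Fin 4)) = {0, 2} from by decide] at s5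
  have s6 := hsub ({0, 1} : Finset (Fin 4)) {0, 2}
  rw [show ({0, 1} ∪ {0, 2} : Finset (Fin 4)) = {0, 1, 2} from by decide,
    show ({0, 1} ∩ {0, 2} : Finset (Fin 4)) = {0} from by decide] at s6
  have m : h {1, 2, 3} ≤ h {0, 1, 2, 3} := hmono _ _ (by decide)
  have pos := hpos ({0} : Finset (Fin 4))
  linarith
end

section
/- There is no polymatroid h on the variables X_1, X_2, X_3, U_1, U_2, U_3, U_4, Z_0, Z_1, Z_2 satisfying: h(X_s) = 2 for s = 1,2,3; h(X_i, X_j) = 3 for i ≠ j; h(Z_α) = |α| for all nonempty α ⊆ {0,1,2}; h(X_1 | Z_0, Z_1) = h(X_2 | Z_0, Z_2) = h(X_3 | Z_1, Z_2) = 0; h(Z_0, Z_1) = h(X_1), h(Z_0, Z_2) = h(X_2), h(Z_1, Z_2) = h(X_3); h(U_e | X_1, X_2, X_3) = 0 for e = 1,...,4; h(X_1 | U_2, U_1) = h(X_2 | U_3, U_1) = h(X_3 | U_4, U_1) = 0; and h(U_e) ≤ 1 for e = 1,...,4. -/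
/-- Ground set encoded as `Fin 10` with `X₁ = 0, X₂ = 1, X₃ = 2, U₁ = 3, U₂ = 4, U₃ = 5,
U₄ = 6, Z₀ = 7, Z₁ = 8, Z₂ = 9`. No polymatroid satisfies the constraints of the improved
LP bound together with unit link capacities. -/
theorem no_polymatroid_improved_LP :
    ¬ ∃ h : Finset (Fin 10) → ℝ, IsPolymatroid h ∧
      h {0} = 2 ∧ h {1} = 2 ∧ h {2} = 2 ∧
      h {0, 1} = 3 ∧ h {0, 2} = 3 ∧ h {1, 2} = 3 ∧
      (∀ α : Finset (Fin 10), α ⊆ {7, 8, 9} → α.Nonempty → h α = α.card) ∧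
      polyCond h {0} {7, 8} = 0 ∧ polyCond h {1} {7, 9} = 0 ∧ polyCond h {2} {8, 9} = 0 ∧
      h {7, 8} = h {0} ∧ h {7, 9} = h {1} ∧ h {8, 9} = h {2} ∧
      (∀ e ∈ ({3, 4, 5, 6} : Finset (Fin 10)), polyCond h {e} {0, 1, 2} = 0) ∧
      polyCond h {0} {4, 3} = 0 ∧ polyCond h {1} {5, 3} = 0 ∧ polyCond h {2} {6, 3} = 0 ∧
      (∀ e ∈ ({3, 4, 5, 6} : Finset (Fin 10)), h {e} ≤ 1) := by
  rintro ⟨h, ⟨h0, hnn, hmono, hsub⟩, hX1, hX2, hX3, h01, h02, h12, hZ,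
    c1, c2, c3, hq1, hq2, hq3, hU, d1, d2, d3, hUb⟩
  -- values on the Z-part
  have z7 : h {7} = 1 := by have := hZ {7} (by decide) (by decide); simpa using this
  have z78 : h {7, 8} = 2 := by have := hZ {7, 8} (by decide) (by decide); simpa using this
  have z79 : h {7, 9} = 2 := by have := hZ {7, 9} (by decide) (by decide); simpa using this
  have z89 : h {8, 9} = 2 := by have := hZ {8, 9} (by decide) (by decide); simpa using this
  have z789 : h {7, 8, 9} = 3 := by
    have := hZ {7, 8, 9} (by decide) (by decide); simpa using this
  -- link capacities
  have u3 : h {3} ≤ 1 := hUb 3 (by decide)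
  have u4 : h {4} ≤ 1 := hUb 4 (by decide)
  have u5 : h {5} ≤ 1 := hUb 5 (by decide)
  have u6 : h {6} ≤ 1 := hUb 6 (by decide)
  -- decoding constraints rewritten
  rw [polyCond, show ({0} ∪ {7, 8} : Finset (Fin 10)) = {0, 7, 8} from by decide] at c1
  rw [polyCond, show ({1} ∪ {7, 9} : Finset (Fin 10)) = {1, 7, 9} from by decide] at c2
  rw [polyCond, show ({2} ∪ {8, 9} : Finset (Fin 10)) = {2, 8, 9} from by decide] at c3
  have b1 : h {0, 7, 8} = 2 := by linarith
  have b2 : h {1, 7, 9} = 2 := by linarith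
  have b3 : h {2, 8, 9} = 2 := by linarith
  rw [polyCond, show ({0} ∪ {4, 3} : Finset (Fin 10)) = {0, 3, 4} from by decide,
    show ({4, 3} : Finset (Fin 10)) = {3, 4} from by decide] at d1
  rw [polyCond, show ({1} ∪ {5, 3} : Finset (Fin 10)) = {1, 3, 5} from by decide,
    show ({5, 3} : Finset (Fin 10)) = {3, 5} from by decide] at d2
  rw [polyCond, show ({2} ∪ {6, 3} : Finset (Fin 10)) = {2, 3, 6} from by decide,
    show ({6, 3} : Finset (Fin 10)) = {3, 6} from by decide] at d3
  -- h{3,4} ≤ h{3}+h{4} etc.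
  have s34 := hsub {3} {4}
  rw [show ({3} ∪ {4} : Finset (Fin 10)) = {3, 4} from by decide,
    show ({3} ∩ {4} : Finset (Fin 10)) = ∅ from by decide] at s34
  have s35 := hsub {3} {5}
  rw [show ({3} ∪ {5} : Finset (Fin 10)) = {3, 5} from by decide,
    show ({3} ∩ {5} : Finset (Fin 10)) = ∅ from by decide] at s35
  have s36 := hsub {3} {6}
  rw [show ({3} ∪ {6} : Finset (Fin 10)) = {3, 6} from by decide,
    show ({3} ∩ {6} : Finset (Fin 10)) = ∅ from by decide] at s36
  have m034 := hmono {0} {0, 3, 4} (by decide)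
  have m135 := hmono {1} {1, 3, 5} (by decide)
  have m236 := hmono {2} {2, 3, 6} (by decide)
  -- h{3}=1 and h({0,3,4}) = 2
  have v3 : h {3} = 1 := by linarith
  have v034 : h {0, 3, 4} = 2 := by linarith
  have v135 : h {1, 3, 5} = 2 := by linarith
  have v236 : h {2, 3, 6} = 2 := by linarith
  -- h{0,3} = 2, h{1,3} = 2, h{2,3} = 2
  have v03 : h {0, 3} = 2 := by
    have l := hmono {0} {0, 3} (by decide)
    have r := hmono {0, 3} {0, 3, 4} (by decide)
    linarith
  have v13 : h {1, 3} = 2 := by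
    have l := hmono {1} {1, 3} (by decide)
    have r := hmono {1, 3} {1, 3, 5} (by decide)
    linarith
  have v23 : h {2, 3} = 2 := by
    have l := hmono {2} {2, 3} (by decide)
    have r := hmono {2, 3} {2, 3, 6} (by decide)
    linarith
  -- h({0,3,7,8}) = 2 and consequences
  have sA := hsub {0, 3} {0, 7, 8}
  rw [show ({0, 3} ∪ {0, 7, 8} : Finset (Fin 10)) = {0, 3, 7, 8} from by decide,
    show ({0, 3} ∩ {0, 7, 8} : Finset (Fin 10)) = {0} from by decide] at sA
  have m78 := hmono {7, 8} {0, 3, 7, 8} (by decide)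
  have v0378 : h {0, 3, 7, 8} = 2 := by linarith
  have v378 : h {3, 7, 8} = 2 := by
    have l := hmono {7, 8} {3, 7, 8} (by decide)
    have r := hmono {3, 7, 8} {0, 3, 7, 8} (by decide)
    linarith
  have v037 : h {0, 3, 7} = 2 := by
    have l := hmono {0, 3} {0, 3, 7} (by decide)
    have r := hmono {0, 3, 7} {0, 3, 7, 8} (by decide)
    linarith
  have v038 : h {0, 3, 8} = 2 := by
    have l := hmono {0, 3} {0, 3, 8} (by decide)
    have r := hmono {0, 3, 8} {0, 3, 7, 8} (by decide)
    linarith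
  -- h({3,7,9}) ≤ 2 via X₂
  have sB := hsub {1, 3} {1, 7, 9}
  rw [show ({1, 3} ∪ {1, 7, 9} : Finset (Fin 10)) = {1, 3, 7, 9} from by decide,
    show ({1, 3} ∩ {1, 7, 9} : Finset (Fin 10)) = {1} from by decide] at sB
  have v379 : h {3, 7, 9} ≤ 2 := by
    have l := hmono {3, 7, 9} {1, 3, 7, 9} (by decide)
    linarith
  -- h({3,8,9}) ≤ 2 via X₃
  have sC := hsub {2, 3} {2, 8, 9}
  rw [show ({2, 3} ∪ {2, 8, 9} : Finset (Fin 10)) = {2, 3, 8, 9} from by decide,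
    show ({2, 3} ∩ {2, 8, 9} : Finset (Fin 10)) = {2} from by decide] at sC
  have v389 : h {3, 8, 9} ≤ 2 := by
    have l := hmono {3, 8, 9} {2, 3, 8, 9} (by decide)
    linarith
  -- h({0,7,8,9}) = 3
  have sD := hsub {0, 7, 8} {7, 8, 9}
  rw [show ({0, 7, 8} ∪ {7, 8, 9} : Finset (Fin 10)) = {0, 7, 8, 9} from by decide,
    show ({0, 7, 8} ∩ {7, 8, 9} : Finset (Fin 10)) = {7, 8} from by decide] at sD
  have mD := hmono {7, 8, 9} {0, 7, 8, 9} (by decide)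
  have v0789 : h {0, 7, 8, 9} = 3 := by linarith
  -- h({0,9}) ≥ 3
  have sE := hsub {0, 9} {0, 7, 8}
  rw [show ({0, 9} ∪ {0, 7, 8} : Finset (Fin 10)) = {0, 7, 8, 9} from by decide,
    show ({0, 9} ∩ {0, 7, 8} : Finset (Fin 10)) = {0} from by decide] at sE
  have v09 : 3 ≤ h {0, 9} := by linarith
  -- h({3,7}) ≤ 1
  have sF := hsub {3, 7, 9} {0, 3, 7}
  rw [show ({3, 7, 9} ∪ {0, 3, 7} : Finset (Fin 10)) = {0, 3, 7, 9} from by decide,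
    show ({3, 7, 9} ∩ {0, 3, 7} : Finset (Fin 10)) = {3, 7} from by decide] at sF
  have mF := hmono {0, 9} {0, 3, 7, 9} (by decide)
  have v37 : h {3, 7} ≤ 1 := by linarith
  -- h({3,8}) ≤ 1
  have sG := hsub {3, 8, 9} {0, 3, 8}
  rw [show ({3, 8, 9} ∪ {0, 3, 8} : Finset (Fin 10)) = {0, 3, 8, 9} from by decide,
    show ({3, 8, 9} ∩ {0, 3, 8} : Finset (Fin 10)) = {3, 8} from by decide] at sG
  have mG := hmono {0, 9} {0, 3, 8, 9} (by decide)
  have v38 : h {3, 8} ≤ 1 := by linarith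
  -- final contradiction: h({3,7,8}) + h({3}) ≤ h({3,7}) + h({3,8})
  have sH := hsub {3, 7} {3, 8}
  rw [show ({3, 7} ∪ {3, 8} : Finset (Fin 10)) = {3, 7, 8} from by decide,
    show ({3, 7} ∩ {3, 8} : Finset (Fin 10)) = {3} from by decide] at sH
  linarith
end

section
/- There exists a polymatroid h (indeed an entropic function) on variables X_1, X_2, X_3, U_1, U_2, U_3, U_4 satisfying: h(X_s) = 2 for s = 1,2,3; h(X_i, X_j) = 3 for i ≠ j, i,j ∈ {1,2,3}; h(U_e | X_1, X_2, X_3) = 0 for e = 1,...,4; h(X_1 | U_2, U_1) = 0, h(X_2 | U_3, U_1) = 0, h(X_3 | U_4, U_1) = 0; and h(U_e) ≤ 1 for e = 1,...,4. Namely, the entropy function of X_1=(b_0,b_1), X_2=(b_0,b_2), X_3=(b_0, b_1⊕b_2), U_1=b_0, U_2=b_1, U_3=b_2, U_4=b_1⊕b_2, where b_0, b_1, b_2 are independent uniform bits, satisfies all constraints. -/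
open scoped BigOperators

/-- The sample space of three i.i.d. uniform bits `(b₀, b₁, b₂)`. -/
abbrev TripleBit := Bool × Bool × Bool

/-- The uniform distribution on three bits. -/
noncomputable def unifBits : TripleBit → ℝ := fun _ => 1 / 8

/-- The seven random variables, indexed with `X₁ = 0, X₂ = 1, X₃ = 2, U₁ = 3, U₂ = 4,
U₃ = 5, U₄ = 6`: `X₁ = (b₀,b₁)`, `X₂ = (b₀,b₂)`, `X₃ = (b₀, b₁ ⊕ b₂)`, `U₁ = b₀`,
`U₂ = b₁`, `U₃ = b₂`, `U₄ = b₁ ⊕ b₂` (single bits padded to pairs). -/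
def netVar : Fin 7 → TripleBit → Bool × Bool :=
  ![fun b => (b.1, b.2.1),
    fun b => (b.1, b.2.2),
    fun b => (b.1, xor b.2.1 b.2.2),
    fun b => (b.1, false),
    fun b => (b.2.1, false),
    fun b => (b.2.2, false),
    fun b => (xor b.2.1 b.2.2, false)]

/-- The joint entropy function (in bits) of the seven variables. -/
noncomputable def netEnt (S : Finset (Fin 7)) : ℝ :=
  entropy unifBits (fun ω (i : Fin 7) => if i ∈ S then netVar i ω else (false, false)) /
    Real.log 2


section AuxNetEnt

set_option maxRecDepth 40000

/-- Size of the "kernel" fiber: the number of sample points on which all variables in `S`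
take the zero value. -/
def kcard (S : Finset (Fin 7)) : ℕ :=
  (Finset.univ.filter fun ω : TripleBit => ∀ i ∈ S, netVar i ω = (false, false)).card

/-- The rank (in bits) of the joint variable indexed by `S`, as a bit-encoded lookup table. -/
def rnk (S : Finset (Fin 7)) : ℕ :=
  (340282366920938463444927863353763626750 >>> (∑ i ∈ S, 2 ^ i.val)) % 2 * 2 +
  (340277174544850476620283723759633689064 >>> (∑ i ∈ S, 2 ^ i.val)) % 2

set_option maxHeartbeats 4000000 in
lemma kcard_pow : ∀ S : Finset (Fin 7), kcard S * 2 ^ rnk S = 8 := by decide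

set_option maxHeartbeats 4000000 in
lemma rnk_mono : ∀ A B : Finset (Fin 7), A ⊆ B → rnk A ≤ rnk B := by decide

set_option maxHeartbeats 4000000 in
lemma rnk_submod : ∀ A B : Finset (Fin 7), rnk (A ∪ B) + rnk (A ∩ B) ≤ rnk A + rnk B := by
  decide

/-- Componentwise XOR on the sample space. -/
def x3 (a b : TripleBit) : TripleBit := (xor a.1 b.1, xor a.2.1 b.2.1, xor a.2.2 b.2.2)

lemma netVar_x3 : ∀ i a b, netVar i (x3 a b) =
    (xor (netVar i a).1 (netVar i b).1, xor (netVar i a).2 (netVar i b).2) := by decide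

lemma x3_invol : ∀ a b, x3 (x3 a b) b = a := by decide

lemma pair_cancel : ∀ u v : Bool × Bool,
    ((xor u.1 v.1, xor u.2 v.2) : Bool × Bool) = v ↔ u = (false, false) := by decide

lemma fiber_card (S : Finset (Fin 7)) (s : Fin 7 → Bool × Bool) :
    (Finset.univ.filter fun ω : TripleBit =>
      (fun i => if i ∈ S then netVar i ω else (false, false)) = s).card = 0 ∨
    (Finset.univ.filter fun ω : TripleBit =>
      (fun i => if i ∈ S then netVar i ω else (false, false)) = s).card = kcard S := by
  rcases em (∃ ω₁ : TripleBit,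
      (fun i => if i ∈ S then netVar i ω₁ else ((false, false) : Bool × Bool)) = s) with
    ⟨ω₁, h1⟩ | he
  · right
    have h1' : ∀ i : Fin 7,
        (if i ∈ S then netVar i ω₁ else ((false, false) : Bool × Bool)) = s i :=
      fun i => congrFun h1 i
    unfold kcard
    apply Finset.card_bij' (fun ω _ => x3 ω ω₁) (fun ω _ => x3 ω ω₁)
    · intro ω hω
      rw [Finset.mem_filter] at hω ⊢
      refine ⟨Finset.mem_univ _, ?_⟩
      intro i hi
      have hs : netVar i ω = s i := by
        have := congrFun hω.2 i
        simpa [hi] using this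
      have hs1 : netVar i ω₁ = s i := by simpa [hi] using h1' i
      rw [netVar_x3, hs, hs1]
      exact Prod.ext (Bool.xor_self _) (Bool.xor_self _)
    · intro ω hω
      rw [Finset.mem_filter] at hω ⊢
      refine ⟨Finset.mem_univ _, ?_⟩
      funext i
      by_cases hi : i ∈ S
      · have hz : netVar i ω = (false, false) := hω.2 i hi
        have hs1 : netVar i ω₁ = s i := by simpa [hi] using h1' i
        simp only [hi, if_true]
        rw [netVar_x3, hz, hs1]
        exact (pair_cancel (false, false) (s i)).mpr rfl
      · simp only [hi, if_false]
        simpa [hi] using h1' i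
    · intro ω _; exact x3_invol ω ω₁
    · intro ω _; exact x3_invol ω ω₁
  · left
    rw [Finset.card_eq_zero, Finset.filter_eq_empty_iff]
    exact fun {ω} _ hc => he ⟨ω, hc⟩

lemma entropy_const_fiber {S : Type*} [Fintype S] [DecidableEq S] (f : TripleBit → S) (k : ℕ)
    (hf : ∀ s, (Finset.univ.filter fun ω => f ω = s).card = 0 ∨
      (Finset.univ.filter fun ω => f ω = s).card = k) :
    entropy unifBits f = Real.log (8 / k) := by
  classical
  set c : S → ℕ := fun s => (Finset.univ.filter fun ω => f ω = s).card with hc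
  have hprob : ∀ s, prob unifBits f s = (c s : ℝ) / 8 := by
    intro s
    unfold prob unifBits
    rw [Finset.sum_const, nsmul_eq_mul]
    ring
  have hsum : ∑ s, c s = 8 := by
    have h := Finset.card_eq_sum_card_fiberwise
      (f := f) (s := (Finset.univ : Finset TripleBit)) (t := Finset.univ)
      (fun x _ => Finset.mem_univ _)
    have h8 : (Finset.univ : Finset TripleBit).card = 8 := by decide
    rw [h8] at h
    exact h.symm
  set A : Finset S := Finset.univ.filter fun s => c s ≠ 0 with hA
  have hcount : A.card * k = 8 := by
    have h1 : ∑ s ∈ A, c s = ∑ s, c s := by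
      apply Finset.sum_filter_of_ne
      intro s _ h
      exact h
    have h2 : ∑ s ∈ A, c s = A.card * k := by
      rw [Finset.sum_congr rfl (fun s hs => ?_), Finset.sum_const, smul_eq_mul]
      rcases hf s with h | h
      · exact absurd h ((Finset.mem_filter.mp hs).2)
      · exact h
    omega
  have hent : entropy unifBits f = A.card * Real.negMulLog ((k : ℝ) / 8) := by
    unfold entropy
    rw [← Finset.sum_filter_of_ne (p := fun s => c s ≠ 0)]
    · rw [Finset.sum_congr rfl (fun s hs => ?_), Finset.sum_const, nsmul_eq_mul]
      rw [hprob]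
      rcases hf s with h | h
      · exact absurd h ((Finset.mem_filter.mp hs).2)
      · rw [show c s = k from h]
    · intro s _ hne
      by_contra h0
      have h0' : c s = 0 := h0
      exact hne (by rw [hprob, h0']; norm_num [Real.negMulLog])
  have hAk : (A.card : ℝ) * (k : ℝ) = 8 := by exact_mod_cast hcount
  have hneg : Real.negMulLog ((k : ℝ)/8) = (k : ℝ)/8 * Real.log (8/(k : ℝ)) := by
    rw [show ((k : ℝ)/8) = ((8 : ℝ)/(k : ℝ))⁻¹ by rw [inv_div], Real.negMulLog,
      Real.log_inv]
    ring
  rw [hent, hneg,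
    show (A.card : ℝ) * ((k : ℝ)/8 * Real.log (8/(k : ℝ))) =
      ((A.card : ℝ) * (k : ℝ))/8 * Real.log (8/(k : ℝ)) by ring, hAk]
  norm_num

lemma netEnt_eq (S : Finset (Fin 7)) : netEnt S = (rnk S : ℝ) := by
  have hp := kcard_pow S
  have hk0 : kcard S ≠ 0 := fun h => by simp [h] at hp
  unfold netEnt
  rw [entropy_const_fiber _ (kcard S) (fun s => fiber_card S s)]
  have hk0' : (kcard S : ℝ) ≠ 0 := Nat.cast_ne_zero.mpr hk0
  have h8 : (8 : ℝ) / (kcard S : ℝ) = 2 ^ rnk S := by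
    have hcast : ((kcard S : ℝ)) * 2 ^ rnk S = 8 := by exact_mod_cast hp
    rw [div_eq_iff hk0', ← hcast]
    ring
  have hl2 : Real.log 2 ≠ 0 := ne_of_gt (Real.log_pos (by norm_num))
  rw [h8, Real.log_pow]
  field_simp

end AuxNetEnt

/-- The entropy function of the explicit construction is a polymatroid satisfying all the
LP-bound constraints with unit link capacities. -/
theorem exists_entropic_polymatroid_LP :
    IsPolymatroid netEnt ∧
      (∀ s ∈ ({0, 1, 2} : Finset (Fin 7)), netEnt {s} = 2) ∧
      (∀ i ∈ ({0, 1, 2} : Finset (Fin 7)), ∀ j ∈ ({0, 1, 2} : Finset (Fin 7)), i ≠ j →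
        netEnt {i, j} = 3) ∧
      (∀ e ∈ ({3, 4, 5, 6} : Finset (Fin 7)), polyCond netEnt {e} {0, 1, 2} = 0) ∧
      polyCond netEnt {0} {4, 3} = 0 ∧ polyCond netEnt {1} {5, 3} = 0 ∧
      polyCond netEnt {2} {6, 3} = 0 ∧
      (∀ e ∈ ({3, 4, 5, 6} : Finset (Fin 7)), netEnt {e} ≤ 1) := by
  have E := netEnt_eq
  refine ⟨⟨?_, ?_, ?_, ?_⟩, ?_, ?_, ?_, ?_, ?_, ?_, ?_⟩
  · rw [E]; norm_cast
  · intro A; rw [E]; positivity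
  · intro A B h; rw [E, E]; exact_mod_cast rnk_mono A B h
  · intro A B; rw [E, E, E, E]; exact_mod_cast rnk_submod A B
  · intro s hs
    fin_cases hs <;> rw [E] <;> norm_cast
  · intro i hi j hj hne
    fin_cases hi <;> fin_cases hj <;>
      first
        | exact absurd rfl hne
        | (rw [E]; norm_cast)
  · intro e he
    fin_cases he <;> simp only [polyCond, E, sub_eq_zero] <;> norm_cast
  · simp only [polyCond, E, sub_eq_zero]; norm_cast
  · simp only [polyCond, E, sub_eq_zero]; norm_cast
  · simp only [polyCond, E, sub_eq_zero]; norm_cast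
  · intro e he
    fin_cases he <;> rw [E] <;> norm_cast
end

section
/- Let X take values in {1,...,n} (n ≥ 3) with p(1) ≥ ... ≥ p(n) > 0, let 2 ≤ i ≤ n-1, and let a ⊆ {2,...,n} be nonempty with a not contained in {i+1,...,n}. Writing X_c for the indicator of X ∈ c, we have: H(X_{{i}} | X_{{i+1}}, ..., X_{{n}}) > 0, and both H(X_{{i}} | X_{{i+1}}, ..., X_{{n}}) ≤ H(X_a | X_{{i+1}}, ..., X_{{n}}) and H(X_{{i}}) ≤ H(X_a). -/
/-!
Conditioned on `X_{i+1}, …, X_n`, only the event `{X ≤ i}` carries entropy, and on it every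
indicator `X_c` is a biased coin: with `φ = negMulLog`, `q = P(X ≤ i)` and `s = P(X ∈ c, X ≤ i)`,
`H(X_c | X_{i+1}, …, X_n) = φ(s) + φ(q - s) - φ(q)`, and likewise `H(X_c) = φ(t) + φ(1 - t)` with
`t = P(X ∈ c)`. The function `x ↦ φ(x) + φ(q - x)` is concave and symmetric about `q / 2`, so
`φ(x) + φ(q - x) ≤ φ(y) + φ(q - y)` whenever `x ≤ min(y, q - y)`. For `c = a` both `s` and
`q - s` are at least `p(i)`: `a` contains some `m₀ ≤ i`, with `p(m₀) ≥ p(i)`, and misses `1`, with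
`p(1) ≥ p(i)`. Positivity is the strict subadditivity of `φ`, applied to `q = p(i) + (q - p(i))`.
-/

open scoped BigOperators

open Real Finset

lemma negMulLog_lt_negMulLog_add_negMulLog_sub {q x : ℝ} (hx : 0 < x) (hxq : x < q) :
    negMulLog q < negMulLog x + negMulLog (q - x) := by
  have hlx : log x < log q := log_lt_log hx hxq
  have hlqx : log (q - x) < log q := log_lt_log (by linarith) (by linarith)
  simp only [negMulLog]
  nlinarith [mul_lt_mul_of_pos_left hlx hx, mul_lt_mul_of_pos_left hlqx (sub_pos.2 hxq)]

lemma negMulLog_mul_add_negMulLog_mul_one_sub (q t : ℝ) :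
    negMulLog (q * t) + negMulLog (q * (1 - t)) = q * binEntropy t + negMulLog q := by
  rw [binEntropy_eq_negMulLog_add_negMulLog_one_sub, negMulLog_mul, negMulLog_mul]
  ring

lemma negMulLog_add_negMulLog_sub_le {q x y : ℝ} (hx : 0 ≤ x) (hxy : x ≤ y)
    (hyq : x + y ≤ q) :
    negMulLog x + negMulLog (q - x) ≤ negMulLog y + negMulLog (q - y) := by
  rcases (show 0 ≤ q by linarith).eq_or_lt with rfl | hq
  · obtain rfl : x = 0 := by linarith
    obtain rfl : y = 0 := by linarith
    rfl
  have hscale : ∀ z, negMulLog z + negMulLog (q - z) = q * binEntropy (z / q) + negMulLog q := by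
    intro z
    rw [← negMulLog_mul_add_negMulLog_mul_one_sub]
    congr 2 <;> field_simp
  -- `binEntropy` is concave and symmetric about `1 / 2`, and `y / q` lies in `[x / q, 1 - x / q]`.
  have hbin : binEntropy (x / q) ≤ binEntropy (y / q) := by
    have hmin := strictConcave_binEntropy.concaveOn.min_le_of_mem_Icc
      (x := x / q) (y := 1 - x / q) (z := y / q) ⟨by positivity, by rw [div_le_one hq]; linarith⟩
      ⟨by rw [sub_nonneg, div_le_one hq]; linarith, by linarith [div_nonneg hx hq.le]⟩
      ⟨div_le_div_of_nonneg_right hxy hq.le,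
        by rw [le_sub_iff_add_le, ← add_div, div_le_one hq]; linarith⟩
    rwa [binEntropy_one_sub, min_self] at hmin
  rw [hscale, hscale]
  gcongr

lemma le_sum_sub_sum_filter {α : Type*} {F : Finset α} {w : α → ℝ} (hw : ∀ m ∈ F, 0 ≤ w m)
    (P : α → Prop) [DecidablePred P] {x : α} (hx : x ∈ F) (hPx : ¬ P x) :
    w x ≤ ∑ m ∈ F, w m - ∑ m ∈ F with P m, w m := by
  rw [← sum_filter_add_sum_filter_not F P w, add_sub_cancel_left]
  exact single_le_sum (fun m hm => hw m (mem_filter.1 hm).1) (mem_filter.2 ⟨hx, hPx⟩)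

lemma negMulLog_add_negMulLog_sub_le_of_le_mem_of_le_notMem {α : Type*} {F : Finset α}
    {w : α → ℝ} (hw : ∀ m ∈ F, 0 ≤ w m) (P : α → Prop) [DecidablePred P] {x y : α} {r : ℝ}
    (hr : 0 ≤ r) (hx : x ∈ F) (hPx : ¬ P x) (hrx : r ≤ w x) (hy : y ∈ F) (hPy : P y)
    (hry : r ≤ w y) :
    negMulLog r + negMulLog (∑ m ∈ F, w m - r)
      ≤ negMulLog (∑ m ∈ F with P m, w m)
        + negMulLog (∑ m ∈ F, w m - ∑ m ∈ F with P m, w m) := by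
  have hyP : w y ≤ ∑ m ∈ F with P m, w m :=
    single_le_sum (fun m hm => hw m (mem_filter.1 hm).1) (mem_filter.2 ⟨hy, hPy⟩)
  have hxP := le_sum_sub_sum_filter hw P hx hPx
  exact negMulLog_add_negMulLog_sub_le hr (hry.trans hyP) (by linarith)

lemma sum_bool_negMulLog_sum_filter_decide {α : Type*} (F : Finset α) (w : α → ℝ)
    (P : α → Prop) [DecidablePred P] :
    ∑ b : Bool, negMulLog (∑ m ∈ F with decide (P m) = b, w m)
      = negMulLog (∑ m ∈ F with P m, w m)
        + negMulLog (∑ m ∈ F, w m - ∑ m ∈ F with P m, w m) := by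
  rw [Fintype.sum_bool, ← sum_filter_add_sum_filter_not F P w, add_sub_cancel_left]
  simp only [decide_eq_true_eq, decide_eq_false_iff_not]

lemma sum_negMulLog_sum_filter_of_eq {α U : Type*} [Fintype U] [DecidableEq U] {F : Finset α}
    (w : α → ℝ) {h : α → U} (hh : ∀ m ∈ F, ∀ m' ∈ F, h m = h m') :
    ∑ u, negMulLog (∑ m ∈ F with h m = u, w m) = negMulLog (∑ m ∈ F, w m) := by
  rcases F.eq_empty_or_nonempty with rfl | ⟨m₀, hm₀⟩
  · simp
  rw [Fintype.sum_eq_single (h m₀) fun u hu => ?_, filter_true_of_mem fun m hm => hh m hm m₀ hm₀]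
  rw [filter_false_of_mem fun m hm hmu => hu ((hmu : h m = u) ▸ hh m hm m₀ hm₀), sum_empty,
    negMulLog_zero]

lemma condEntropy_eq_sum_sub {Ω S T : Type*} [Fintype Ω] [Fintype S] [Fintype T]
    [DecidableEq S] [DecidableEq T] (μ : Ω → ℝ) (Z : Ω → S) (Y : Ω → T) :
    condEntropy μ Z Y = ∑ t, (∑ s, negMulLog (prob μ (fun ω => (Z ω, Y ω)) (s, t))
      - negMulLog (prob μ Y t)) := by
  rw [condEntropy, entropy, entropy, Fintype.sum_prod_type, sum_comm, ← sum_sub_distrib]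

section FunctionOfX

variable {Ω S : Type*} [Fintype Ω] [DecidableEq S] {μ : Ω → ℝ} {X : Ω → S} {T : Finset S}

lemma prob_comp_s19 {U : Type*} [DecidableEq U] (hμ : ∀ ω, 0 ≤ μ ω)
    (hX : ∀ ω, 0 < μ ω → X ω ∈ T) (f : S → U) (u : U) :
    prob μ (fun ω => f (X ω)) u = ∑ m ∈ T with f m = u, prob μ X m := by
  unfold prob
  simp only [sum_filter (fun ω => X ω = _), sum_filter (fun ω => f (X ω) = u)]
  rw [sum_comm]
  refine sum_congr rfl fun ω _ => ?_
  rw [sum_ite_eq]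
  rcases (hμ ω).eq_or_lt with h0 | hpos
  · simp [← h0]
  · simp [hX ω hpos]

lemma entropy_comp {U : Type*} [Fintype U] [DecidableEq U] (hμ : ∀ ω, 0 ≤ μ ω)
    (hX : ∀ ω, 0 < μ ω → X ω ∈ T) (f : S → U) :
    entropy μ (fun ω => f (X ω)) = ∑ u, negMulLog (∑ m ∈ T with f m = u, prob μ X m) := by
  simp only [entropy, prob_comp_s19 hμ hX]

lemma entropy_indicator (hμ : ∀ ω, 0 ≤ μ ω) (hX : ∀ ω, 0 < μ ω → X ω ∈ T) (P : S → Prop)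
    [DecidablePred P] :
    entropy μ (fun ω => decide (P (X ω)))
      = negMulLog (∑ m ∈ T with P m, prob μ X m)
        + negMulLog (∑ m ∈ T, prob μ X m - ∑ m ∈ T with P m, prob μ X m) := by
  rw [entropy_comp hμ hX (fun m => decide (P m)), sum_bool_negMulLog_sum_filter_decide]

lemma condEntropy_comp_eq_of_injOn {U V : Type*} [Fintype U] [DecidableEq U] [Fintype V]
    [DecidableEq V] (hμ : ∀ ω, 0 ≤ μ ω) (hX : ∀ ω, 0 < μ ω → X ω ∈ T) (h : S → U) (g : S → V)
    (c : V) (hg : ∀ m ∈ T, ∀ m' ∈ T, g m = g m' → g m ≠ c → m = m') :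
    condEntropy μ (fun ω => h (X ω)) (fun ω => g (X ω))
      = ∑ u, negMulLog (∑ m ∈ T.filter (g · = c) with h m = u, prob μ X m)
        - negMulLog (∑ m ∈ T with g m = c, prob μ X m) := by
  have hfiber : ∀ u v, prob μ (fun ω => (h (X ω), g (X ω))) (u, v)
      = ∑ m ∈ T.filter (g · = v) with h m = u, prob μ X m := by
    intro u v
    rw [prob_comp_s19 hμ hX (fun m => (h m, g m)), filter_filter]
    simp only [Prod.mk.injEq, and_comm]
  rw [condEntropy_eq_sum_sub, Fintype.sum_eq_single c fun v hv => ?_]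
  · simp only [hfiber, prob_comp_s19 hμ hX g]
  · rw [sub_eq_zero, prob_comp_s19 hμ hX g]
    simp only [hfiber]
    refine sum_negMulLog_sum_filter_of_eq _ fun m hm m' hm' => ?_
    rw [mem_filter] at hm hm'
    rw [hg m hm.1 m' hm'.1 (hm.2.trans hm'.2.symm) (hm.2.trans_ne hv)]

end FunctionOfX

lemma condEntropy_indicator_tail {Ω : Type*} [Fintype Ω] {μ : Ω → ℝ} {X : Ω → ℕ} {n i : ℕ}
    (hμ : ∀ ω, 0 ≤ μ ω) (hX : ∀ ω, 0 < μ ω → X ω ∈ Icc 1 n) (hin : i ≤ n) (P : ℕ → Prop)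
    [DecidablePred P] :
    condEntropy μ (fun ω => decide (P (X ω)))
        (fun ω (j : {j // j ∈ Icc (i + 1) n}) => decide (X ω = j.1))
      = negMulLog (∑ m ∈ Icc 1 i with P m, prob μ X m)
        + negMulLog (∑ m ∈ Icc 1 i, prob μ X m - ∑ m ∈ Icc 1 i with P m, prob μ X m)
        - negMulLog (∑ m ∈ Icc 1 i, prob μ X m) := by
  set g : ℕ → {j // j ∈ Icc (i + 1) n} → Bool := fun m j => decide (m = j.1)
  have hg_eq_false : ∀ m, g m = (fun _ => false) ↔ m ∉ Icc (i + 1) n := by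
    refine fun m => ⟨fun h hm => ?_, fun h => funext fun j => ?_⟩
    · simpa [g] using congrFun h ⟨m, hm⟩
    · simpa [g] using fun (hmj : m = j.1) => h (hmj ▸ j.2)
  have hfiber : {m ∈ Icc 1 n | g m = fun _ => false} = Icc 1 i := by
    ext m
    simp only [mem_filter, hg_eq_false, mem_Icc]
    omega
  have hg : ∀ m ∈ Icc 1 n, ∀ m' ∈ Icc 1 n, g m = g m' → g m ≠ (fun _ => false) → m = m' := by
    intro m _ m' _ hmm' hm
    have hm : m ∈ Icc (i + 1) n := by simpa [hg_eq_false] using hm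
    exact (by simpa [g] using congrFun hmm' ⟨m, hm⟩ : m' = m).symm
  rw [condEntropy_comp_eq_of_injOn hμ hX (fun m => decide (P m)) g _ hg, hfiber,
    sum_bool_negMulLog_sum_filter_decide]

theorem singleton_indicator_min_general (n : ℕ) {Ω : Type*} [Fintype Ω]
    (μ : Ω → ℝ) (hμ : IsPMF μ) (X : Ω → ℕ)
    (hrange : ∀ ω, 0 < μ ω → X ω ∈ Finset.Icc 1 n)
    (hpos : ∀ j ∈ Finset.Icc 1 n, 0 < prob μ X j)
    (hmono : ∀ j k, 1 ≤ j → j ≤ k → k ≤ n → prob μ X k ≤ prob μ X j)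
    (i : ℕ) (hin : i ≤ n - 1)
    (a : Finset ℕ) (ha : a ⊆ Finset.Icc 2 n)
    (hnot : ¬ a ⊆ Finset.Icc (i + 1) n) :
    0 < condEntropy μ (fun ω => decide (X ω = i))
        (fun ω (j : {j // j ∈ Finset.Icc (i + 1) n}) => decide (X ω = j.1)) ∧
    condEntropy μ (fun ω => decide (X ω = i))
        (fun ω (j : {j // j ∈ Finset.Icc (i + 1) n}) => decide (X ω = j.1)) ≤
      condEntropy μ (fun ω => decide (X ω ∈ a))
        (fun ω (j : {j // j ∈ Finset.Icc (i + 1) n}) => decide (X ω = j.1)) ∧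
    entropy μ (fun ω => decide (X ω = i)) ≤ entropy μ (fun ω => decide (X ω ∈ a)) := by
  obtain ⟨m₀, hm₀a, hm₀i⟩ := not_subset.mp hnot
  have hm₀ : 2 ≤ m₀ ∧ m₀ ≤ i := by
    have := ha hm₀a
    simp only [mem_Icc] at this hm₀i
    omega
  have h1a : 1 ∉ a := fun h => by simpa using ha h
  have hpi : 0 < prob μ X i := hpos i (mem_Icc.2 ⟨by omega, by omega⟩)
  have hsingleton : ∀ k, i ≤ k → ∑ m ∈ Icc 1 k with m = i, prob μ X m = prob μ X i :=
    fun k hik => by rw [sum_filter, sum_ite_eq', if_pos (mem_Icc.2 ⟨by omega, hik⟩)]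
  have hcompare : ∀ k, i ≤ k → k ≤ n →
      negMulLog (prob μ X i) + negMulLog (∑ m ∈ Icc 1 k, prob μ X m - prob μ X i)
        ≤ negMulLog (∑ m ∈ Icc 1 k with m ∈ a, prob μ X m)
          + negMulLog (∑ m ∈ Icc 1 k, prob μ X m - ∑ m ∈ Icc 1 k with m ∈ a, prob μ X m) :=
    fun k hik hkn => negMulLog_add_negMulLog_sub_le_of_le_mem_of_le_notMem
      (fun m hm => (hpos m (Icc_subset_Icc le_rfl hkn hm)).le) (· ∈ a) hpi.le
      (mem_Icc.2 ⟨le_rfl, by omega⟩) h1a (hmono 1 i le_rfl (by omega) (by omega))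
      (mem_Icc.2 ⟨by omega, by omega⟩) hm₀a (hmono m₀ i (by omega) hm₀.2 (by omega))
  have hin' : i ≤ n := by omega
  rw [condEntropy_indicator_tail hμ.1 hrange hin' (· = i),
    condEntropy_indicator_tail hμ.1 hrange hin' (· ∈ a), entropy_indicator hμ.1 hrange (· = i),
    entropy_indicator hμ.1 hrange (· ∈ a), hsingleton i le_rfl, hsingleton n hin']
  refine ⟨?_, by linarith [hcompare i le_rfl hin'], hcompare n hin' le_rfl⟩
  have hrest := le_sum_sub_sum_filter (fun m hm => (hpos m (Icc_subset_Icc le_rfl hin' hm)).le)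
    (· = i) (mem_Icc.2 ⟨le_rfl, by omega⟩) (by omega : ¬ 1 = i)
  rw [hsingleton i le_rfl] at hrest
  have := negMulLog_lt_negMulLog_add_negMulLog_sub hpi
    (by linarith [hpos 1 (mem_Icc.2 ⟨le_rfl, by omega⟩)])
  linarith

/-- Property 5 (singleton `Xᵢ`): with `p(1) ≥ … ≥ p(n) > 0`, `2 ≤ i ≤ n-1`, and nonempty
`a ⊆ {2,…,n}` not contained in `{i+1,…,n}`:
`H(X_{i} | X_{i+1},…,X_{n}) > 0`, and the singleton indicator minimizes both the conditional
entropy given `X_{i+1},…,X_{n}` and the unconditional entropy among such `X_a`. -/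
theorem singleton_indicator_min (n : ℕ) (hn : 3 ≤ n) {Ω : Type*} [Fintype Ω]
    (μ : Ω → ℝ) (hμ : IsPMF μ) (X : Ω → ℕ)
    (hrange : ∀ ω, 0 < μ ω → X ω ∈ Finset.Icc 1 n)
    (hpos : ∀ j ∈ Finset.Icc 1 n, 0 < prob μ X j)
    (hmono : ∀ j k, 1 ≤ j → j ≤ k → k ≤ n → prob μ X k ≤ prob μ X j)
    (i : ℕ) (hi2 : 2 ≤ i) (hin : i ≤ n - 1)
    (a : Finset ℕ) (ha : a ⊆ Finset.Icc 2 n) (hane : a.Nonempty)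
    (hnot : ¬ a ⊆ Finset.Icc (i + 1) n) :
    0 < condEntropy μ (fun ω => decide (X ω = i))
        (fun ω (j : {j // j ∈ Finset.Icc (i + 1) n}) => decide (X ω = j.1)) ∧
    condEntropy μ (fun ω => decide (X ω = i))
        (fun ω (j : {j // j ∈ Finset.Icc (i + 1) n}) => decide (X ω = j.1)) ≤
      condEntropy μ (fun ω => decide (X ω ∈ a))
        (fun ω (j : {j // j ∈ Finset.Icc (i + 1) n}) => decide (X ω = j.1)) ∧
    entropy μ (fun ω => decide (X ω = i)) ≤ entropy μ (fun ω => decide (X ω ∈ a)) :=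
  singleton_indicator_min_general n μ hμ X hrange hpos hmono i hin a ha hnot
end
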